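/- Let φ : ℕ → ℕ be a weakly order-preserving function, and let λ and μ be partitions of length n with φ(λ) = μ. If {f_ζ}_{ζ ∈ S_λ} is a KZ family, then the family {g_η}_{η ∈ S_μ} defined by g_η = Σ_{ζ ∈ S_λ : φ(ζ) = η} f_ζ (where each g_η is a homogeneous polynomial of degree λ₁+⋯+λₙ) satisfies the KZ relations indexed by S_μ: T_i g_η = g_{s_i η} when η_i > η_{i+1}; T_i g_η = t g_η when η_i = η_{i+1}; and g_η(x₁,…,xₙ) = g_{(η_n,η₁,…,η_{n−1})}(xₙ, x₁,…,x_{n−1}). -/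

import Mathlib

open MvPolynomial

set_option maxHeartbeats 1000000
set_option synthInstance.maxHeartbeats 400000
set_option maxRecDepth 10000

noncomputable section

/-- The field `ℚ(t)` of rational functions in `t`. -/
abbrev Kt : Type := RatFunc ℚ

/-- The element `t` of `ℚ(t)`. -/
def tK : Kt := RatFunc.X

/-- The polynomial ring `ℚ(t)[x₁,…,xₙ]`. -/
abbrev Rt (n : ℕ) : Type := MvPolynomial (Fin n) Kt

/-- The field of rational functions in `x₁,…,xₙ` over `ℚ(t)`. -/
abbrev Ft (n : ℕ) : Type := FractionRing (Rt n)

/-- The canonical embedding of polynomials into rational functions. -/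
def toF (n : ℕ) : Rt n →+* Ft n := algebraMap (Rt n) (Ft n)

/-- The variable `x_i` (1-based: `x_i` is the variable of index `i-1`). -/
def xF (n : ℕ) (i : Fin n) : Ft n := toF n (X i)

/-- The scalar `t` as a rational function. -/
def tF (n : ℕ) : Ft n := toF n (C tK)

/-- The transposition of the (1-based) variables `x_i` and `x_{i+1}`. -/
def swapPerm (n i : ℕ) : Equiv.Perm (Fin n) :=
  if h : 1 ≤ i ∧ i < n then Equiv.swap ⟨i - 1, by omega⟩ ⟨i, h.2⟩ else Equiv.refl _

/-- A permutation of the variables `x₁,…,xₙ`, as a field automorphism of the field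
of rational functions. -/
def permF (n : ℕ) (σ : Equiv.Perm (Fin n)) : Ft n ≃+* Ft n :=
  IsFractionRing.ringEquivOfRingEquiv (renameEquiv Kt σ).toRingEquiv

/-- The operator `s_i`, interchanging the variables `x_i` and `x_{i+1}`. -/
def sOp (n i : ℕ) : Ft n ≃+* Ft n := permF n (swapPerm n i)

/-- The operator `L_i f = ((t·x_i − x_{i+1})/(x_i − x_{i+1}))·(f − s_i f)`
(for `1 ≤ i ≤ n−1`). -/
def LOp (n i : ℕ) (f : Ft n) : Ft n :=
  if h : 1 ≤ i ∧ i < n then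
    ((tF n * xF n ⟨i - 1, by omega⟩ - xF n ⟨i, h.2⟩) /
        (xF n ⟨i - 1, by omega⟩ - xF n ⟨i, h.2⟩)) * (f - sOp n i f)
  else 0

/-- The Demazure–Lusztig operator `T_i f = t·f − L_i f`. -/
def TOp (n i : ℕ) (f : Ft n) : Ft n := tF n * f - LOp n i f

/-- The set `S_λ` of compositions obtained by permuting the parts of `lam`. -/
def SLam (n : ℕ) (lam : Fin n → ℕ) : Finset (Fin n → ℕ) :=
  Finset.image (fun σ : Equiv.Perm (Fin n) => lam ∘ σ) Finset.univ

/-- The cyclic shift `(η₁,…,ηₙ) ↦ (ηₙ,η₁,…,η_{n−1})` of a composition. -/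
def cycComp (n : ℕ) [NeZero n] (η : Fin n → ℕ) : Fin n → ℕ := fun j => η (j - 1)

/-- The composition `η` with its entries at the (1-based) positions `i` and `i+1`
interchanged. -/
def sEta (n i : ℕ) (η : Fin n → ℕ) : Fin n → ℕ := η ∘ (swapPerm n i)

/-- The KZ relations (the qKZ relations at `q = 1`) for a family `{f_η}_{η ∈ S_ν}`
of polynomials in `x₁,…,xₙ` with coefficients in `ℚ(t)`:
`T_i f_η = f_{s_i η}` when `η_i > η_{i+1}`, `T_i f_η = t·f_η` when
`η_i = η_{i+1}`, and `f_η(x₁,…,xₙ) = f_{(ηₙ,η₁,…,η_{n−1})}(xₙ,x₁,…,x_{n−1})`. -/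
def KZRel (n : ℕ) [NeZero n] (nu : Fin n → ℕ) (f : (Fin n → ℕ) → Rt n) : Prop :=
  (∀ η ∈ SLam n nu, ∀ (i : ℕ) (_ : 1 ≤ i) (hin : i < n),
    η ⟨i, hin⟩ < η ⟨i - 1, by omega⟩ →
      TOp n i (toF n (f η)) = toF n (f (sEta n i η))) ∧
  (∀ η ∈ SLam n nu, ∀ (i : ℕ) (_ : 1 ≤ i) (hin : i < n),
    η ⟨i - 1, by omega⟩ = η ⟨i, hin⟩ →
      TOp n i (toF n (f η)) = tF n * toF n (f η)) ∧
  (∀ η ∈ SLam n nu,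
    f η = rename (fun j : Fin n => j - 1) (f (cycComp n η)))

/-- A KZ family: a family of homogeneous polynomials of degree `|ν|` satisfying the
KZ relations. -/
def IsKZ (n : ℕ) [NeZero n] (nu : Fin n → ℕ) (f : (Fin n → ℕ) → Rt n) : Prop :=
  (∀ η ∈ SLam n nu, (f η).IsHomogeneous (∑ i, nu i)) ∧ KZRel n nu f

/-! Each relation for `g_η` is the sum of relations for the `f_ζ` in the fibre of `η`. Since `φ`
is monotone, `η_i > η_{i+1}` forces `ζ_i > ζ_{i+1}` on the whole fibre, and `s_i` maps the
fibre of `η` bijectively onto that of `s_i η`; the cyclic relation transports the same way.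
When `η_i = η_{i+1}`, the fibre is `s_i`-stable: its members with `ζ_i = ζ_{i+1}` satisfy
`T_i f_ζ = t f_ζ`, and the others pair up as `f_ζ + f_{s_i ζ} = f_ζ + T_i f_ζ` with
`ζ_i > ζ_{i+1}`, which `T_i` multiplies by `t` by the Hecke relation `(T_i - t)(T_i + 1) = 0`. -/

lemma permF_toF (n : ℕ) (σ : Equiv.Perm (Fin n)) (p : Rt n) :
    permF n σ (toF n p) = toF n (rename σ p) := by
  simp [permF, toF]

lemma swapPerm_involutive (n i : ℕ) : Function.Involutive (swapPerm n i) := by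
  unfold swapPerm
  split <;> simp [Function.Involutive]

lemma swapPerm_apply_left (n i : ℕ) (h1 : 1 ≤ i) (h2 : i < n) :
    swapPerm n i ⟨i - 1, by omega⟩ = ⟨i, h2⟩ := by
  simp [swapPerm, h1, h2]

lemma swapPerm_apply_right (n i : ℕ) (h1 : 1 ≤ i) (h2 : i < n) :
    swapPerm n i ⟨i, h2⟩ = ⟨i - 1, by omega⟩ := by
  simp [swapPerm, h1, h2]

lemma sOp_sOp (n i : ℕ) (f : Ft n) : sOp n i (sOp n i f) = f := by
  have hid : ((sOp n i : Ft n →+* Ft n).comp (sOp n i)) = RingHom.id (Ft n) := by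
    refine IsLocalization.ringHom_ext (nonZeroDivisors (Rt n)) (RingHom.ext fun p => ?_)
    change sOp n i (sOp n i (toF n p)) = toF n p
    simp only [sOp, permF_toF, rename_rename, (swapPerm_involutive n i).comp_self, rename_id,
      AlgHom.id_apply]
  exact RingHom.congr_fun hid f

lemma sOp_tF (n i : ℕ) : sOp n i (tF n) = tF n := by
  simp [sOp, tF, permF_toF]

lemma sOp_xF (n i : ℕ) (j : Fin n) : sOp n i (xF n j) = xF n (swapPerm n i j) := by
  simp [sOp, xF, permF_toF]

lemma xF_sub_xF_ne_zero (n : ℕ) {j k : Fin n} (hjk : j ≠ k) : xF n j - xF n k ≠ 0 :=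
  sub_ne_zero.2 fun h => hjk (X_injective (IsFractionRing.injective (Rt n) (Ft n) h))

lemma TOp_add (n i : ℕ) (u v : Ft n) : TOp n i (u + v) = TOp n i u + TOp n i v := by
  unfold TOp LOp
  split
  · rw [map_add]; ring
  · ring

lemma TOp_sum (n i : ℕ) {α : Type*} (s : Finset α) (F : α → Ft n) :
    TOp n i (∑ a ∈ s, F a) = ∑ a ∈ s, TOp n i (F a) :=
  map_sum (AddMonoidHom.mk' (TOp n i) (TOp_add n i)) F s

lemma TOp_of_sOp_eq (n i : ℕ) {f : Ft n} (hf : sOp n i f = f) : TOp n i f = tF n * f := by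
  unfold TOp LOp
  split <;> simp [hf]

lemma TOp_eq (n i : ℕ) (h1 : 1 ≤ i) (h2 : i < n) (f : Ft n) :
    TOp n i f = tF n * f -
      ((tF n * xF n ⟨i - 1, by omega⟩ - xF n ⟨i, h2⟩) /
        (xF n ⟨i - 1, by omega⟩ - xF n ⟨i, h2⟩)) * (f - sOp n i f) := by
  simp [TOp, LOp, h1, h2]

lemma sOp_add_TOp (n i : ℕ) (h1 : 1 ≤ i) (h2 : i < n) (f : Ft n) :
    sOp n i (f + TOp n i f) = f + TOp n i f := by
  have hne : (⟨i - 1, by omega⟩ : Fin n) ≠ ⟨i, h2⟩ := by simp only [ne_eq, Fin.mk.injEq]; omega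
  have hd := xF_sub_xF_ne_zero n hne
  have hd' := xF_sub_xF_ne_zero n hne.symm
  have hsum : (tF n * xF n ⟨i - 1, by omega⟩ - xF n ⟨i, h2⟩) /
        (xF n ⟨i - 1, by omega⟩ - xF n ⟨i, h2⟩) +
      (tF n * xF n ⟨i, h2⟩ - xF n ⟨i - 1, by omega⟩) /
        (xF n ⟨i, h2⟩ - xF n ⟨i - 1, by omega⟩) = tF n + 1 := by
    field_simp
    ring
  rw [TOp_eq n i h1 h2]
  simp only [map_add, map_sub, map_mul, map_div₀, sOp_tF, sOp_xF, sOp_sOp,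
    swapPerm_apply_left n i h1 h2, swapPerm_apply_right n i h1 h2]
  linear_combination (f - sOp n i f) * hsum

lemma TOp_add_TOp (n i : ℕ) (h1 : 1 ≤ i) (h2 : i < n) (f : Ft n) :
    TOp n i (f + TOp n i f) = tF n * (f + TOp n i f) :=
  TOp_of_sOp_eq n i (sOp_add_TOp n i h1 h2 f)

lemma comp_mem_SLam (n : ℕ) {lam ζ : Fin n → ℕ} (τ : Equiv.Perm (Fin n))
    (h : ζ ∈ SLam n lam) : ζ ∘ τ ∈ SLam n lam := by
  simp only [SLam, Finset.mem_image, Finset.mem_univ, true_and] at h ⊢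
  obtain ⟨σ, rfl⟩ := h
  exact ⟨σ * τ, rfl⟩

lemma sEta_sEta (n i : ℕ) (ζ : Fin n → ℕ) : sEta n i (sEta n i ζ) = ζ := by
  funext j
  simp [sEta, swapPerm_involutive n i j]

lemma sEta_apply_left (n i : ℕ) (h1 : 1 ≤ i) (h2 : i < n) (ζ : Fin n → ℕ) :
    sEta n i ζ ⟨i - 1, by omega⟩ = ζ ⟨i, h2⟩ := by
  simp [sEta, swapPerm_apply_left n i h1 h2]

lemma sEta_apply_right (n i : ℕ) (h1 : 1 ≤ i) (h2 : i < n) (ζ : Fin n → ℕ) :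
    sEta n i ζ ⟨i, h2⟩ = ζ ⟨i - 1, by omega⟩ := by
  simp [sEta, swapPerm_apply_right n i h1 h2]

lemma sEta_of_eq (n i : ℕ) (h1 : 1 ≤ i) (h2 : i < n) {η : Fin n → ℕ}
    (heq : η ⟨i - 1, by omega⟩ = η ⟨i, h2⟩) : sEta n i η = η := by
  funext j
  simp only [sEta, Function.comp_apply, swapPerm, dif_pos (And.intro h1 h2)]
  rcases eq_or_ne j ⟨i - 1, by omega⟩ with rfl | hj
  · rw [Equiv.swap_apply_left]; exact heq.symm
  rcases eq_or_ne j ⟨i, h2⟩ with rfl | hj'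
  · rw [Equiv.swap_apply_right]; exact heq
  · rw [Equiv.swap_apply_of_ne_of_ne hj hj']

section Fibre

variable (n : ℕ) (φ : ℕ → ℕ) (lam : Fin n → ℕ)

def fibre (η : Fin n → ℕ) : Finset (Fin n → ℕ) :=
  (SLam n lam).filter (fun ζ => (fun i => φ (ζ i)) = η)

variable {n φ lam}

lemma mem_fibre {η ζ : Fin n → ℕ} :
    ζ ∈ fibre n φ lam η ↔ ζ ∈ SLam n lam ∧ (fun i => φ (ζ i)) = η :=
  Finset.mem_filter

lemma comp_mem_fibre {η ζ : Fin n → ℕ} (τ : Equiv.Perm (Fin n)) (h : ζ ∈ fibre n φ lam η) :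
    ζ ∘ τ ∈ fibre n φ lam (η ∘ τ) := by
  obtain ⟨hζ, rfl⟩ := mem_fibre.1 h
  exact mem_fibre.2 ⟨comp_mem_SLam n τ hζ, rfl⟩

lemma sum_fibre_comp {M : Type*} [AddCommMonoid M] (η : Fin n → ℕ) (τ : Equiv.Perm (Fin n))
    (F : (Fin n → ℕ) → M) :
    ∑ ζ ∈ fibre n φ lam (η ∘ τ), F ζ = ∑ ζ ∈ fibre n φ lam η, F (ζ ∘ τ) := by
  refine (Finset.sum_nbij' (· ∘ τ) (· ∘ τ.symm) (fun ζ hζ => comp_mem_fibre τ hζ)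
    (fun ζ hζ => ?_) (fun ζ _ => ?_) (fun ζ _ => ?_) (fun _ _ => rfl)).symm
  · simpa [Function.comp_assoc] using comp_mem_fibre τ.symm hζ
  · simp [Function.comp_assoc]
  · simp [Function.comp_assoc]

lemma sum_fibre_eq_add_sum_pairs {M : Type*} [AddCommMonoid M] (i : ℕ) (h1 : 1 ≤ i)
    (h2 : i < n) {η : Fin n → ℕ} (heq : η ⟨i - 1, by omega⟩ = η ⟨i, h2⟩)
    (F : (Fin n → ℕ) → M) :
    ∑ ζ ∈ fibre n φ lam η, F ζ =
      ∑ ζ ∈ (fibre n φ lam η).filter (fun ζ => ζ ⟨i - 1, by omega⟩ = ζ ⟨i, h2⟩), F ζ +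
        ∑ ζ ∈ (fibre n φ lam η).filter (fun ζ => ζ ⟨i, h2⟩ < ζ ⟨i - 1, by omega⟩),
          (F ζ + F (sEta n i ζ)) := by
  set S := fibre n φ lam η
  set p : Fin n := ⟨i - 1, by omega⟩
  set q : Fin n := ⟨i, h2⟩
  have hS : ∀ ζ ∈ S, sEta n i ζ ∈ S := fun ζ hζ => by
    have h := comp_mem_fibre (swapPerm n i) hζ
    rwa [← sEta, ← sEta, sEta_of_eq n i h1 h2 heq] at h
  have hp : ∀ ζ, sEta n i ζ p = ζ q := sEta_apply_left n i h1 h2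
  have hq : ∀ ζ, sEta n i ζ q = ζ p := sEta_apply_right n i h1 h2
  have hswap : ∑ ζ ∈ S.filter (fun ζ => ζ p < ζ q), F ζ =
      ∑ ζ ∈ S.filter (fun ζ => ζ q < ζ p), F (sEta n i ζ) :=
    Finset.sum_nbij' (sEta n i) (sEta n i)
      (fun ζ hζ => by simp_all only [Finset.mem_filter, and_self])
      (fun ζ hζ => by simp_all only [Finset.mem_filter, and_self])
      (fun ζ _ => sEta_sEta n i ζ) (fun ζ _ => sEta_sEta n i ζ) (fun ζ _ => by rw [sEta_sEta])
  have hlt : S.filter (fun ζ => ¬ζ p = ζ q ∧ ζ q < ζ p) = S.filter (fun ζ => ζ q < ζ p) :=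
    Finset.filter_congr fun ζ _ => by omega
  have hgt : S.filter (fun ζ => ¬ζ p = ζ q ∧ ¬ζ q < ζ p) = S.filter (fun ζ => ζ p < ζ q) :=
    Finset.filter_congr fun ζ _ => by omega
  have hne : ∑ ζ ∈ S.filter (fun ζ => ¬ζ p = ζ q), F ζ =
      ∑ ζ ∈ S.filter (fun ζ => ζ q < ζ p), F ζ + ∑ ζ ∈ S.filter (fun ζ => ζ p < ζ q), F ζ := by
    rw [← Finset.sum_filter_add_sum_filter_not _ (fun ζ => ζ q < ζ p), Finset.filter_filter,
      Finset.filter_filter, hlt, hgt]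
  rw [← Finset.sum_filter_add_sum_filter_not S (fun ζ => ζ p = ζ q), hne, hswap,
    Finset.sum_add_distrib]

end Fibre

theorem stmt_12_general (n : ℕ) [NeZero n] (φ : ℕ → ℕ) (hφ : Monotone φ)
    (lam mu : Fin n → ℕ)
    (f : (Fin n → ℕ) → Rt n) (hf : IsKZ n lam f) :
    (∀ η ∈ SLam n mu,
      (∑ ζ ∈ (SLam n lam).filter (fun ζ => (fun i => φ (ζ i)) = η), f ζ).IsHomogeneous
        (∑ i, lam i)) ∧
    KZRel n mu (fun η => ∑ ζ ∈ (SLam n lam).filter (fun ζ => (fun i => φ (ζ i)) = η), f ζ) := by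
  obtain ⟨hhom, hlt, heq, hcyc⟩ := hf
  change (∀ η ∈ SLam n mu, (∑ ζ ∈ fibre n φ lam η, f ζ).IsHomogeneous _) ∧
    KZRel n mu (fun η => ∑ ζ ∈ fibre n φ lam η, f ζ)
  have mem {η ζ} (h : ζ ∈ fibre n φ lam η) : ζ ∈ SLam n lam := (mem_fibre.1 h).1
  refine ⟨fun η _ => IsHomogeneous.sum _ _ _ fun ζ hζ => hhom ζ (mem hζ),
    fun η _ i h1 h2 hη => ?_, fun η _ i h1 h2 hη => ?_, fun η _ => ?_⟩
  · change TOp n i (toF n (∑ ζ ∈ fibre n φ lam η, f ζ)) =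
      toF n (∑ ζ ∈ fibre n φ lam (η ∘ swapPerm n i), f ζ)
    rw [map_sum, map_sum, TOp_sum, sum_fibre_comp]
    refine Finset.sum_congr rfl fun ζ hζ => hlt ζ (mem hζ) i h1 h2 ?_
    obtain ⟨-, rfl⟩ := mem_fibre.1 hζ
    exact hφ.reflect_lt hη
  · change TOp n i (toF n (∑ ζ ∈ fibre n φ lam η, f ζ)) =
      tF n * toF n (∑ ζ ∈ fibre n φ lam η, f ζ)
    rw [map_sum, sum_fibre_eq_add_sum_pairs i h1 h2 hη, TOp_add, TOp_sum, TOp_sum, mul_add,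
      Finset.mul_sum, Finset.mul_sum]
    congr 1
    · refine Finset.sum_congr rfl fun ζ hζ => ?_
      obtain ⟨hζ, hζeq⟩ := Finset.mem_filter.1 hζ
      exact heq ζ (mem hζ) i h1 h2 hζeq
    · refine Finset.sum_congr rfl fun ζ hζ => ?_
      obtain ⟨hζ, hζlt⟩ := Finset.mem_filter.1 hζ
      rw [← hlt ζ (mem hζ) i h1 h2 hζlt, TOp_add_TOp n i h1 h2]
  · change ∑ ζ ∈ fibre n φ lam η, f ζ =
      rename _ (∑ ζ ∈ fibre n φ lam (η ∘ Equiv.subRight 1), f ζ)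
    rw [sum_fibre_comp, map_sum]
    exact Finset.sum_congr rfl fun ζ hζ => hcyc ζ (mem hζ)

/-- Proposition 4.2 of the paper: if `φ` is weakly order-preserving with
`φ(λ) = μ` and `{f_ζ}_{ζ ∈ S_λ}` is a KZ family, then the projected family
`g_η = Σ_{ζ ∈ S_λ : φ(ζ) = η} f_ζ` (a family of homogeneous polynomials of degree
`|λ|`) satisfies the KZ relations indexed by `S_μ`. -/
theorem stmt_12 (n : ℕ) [NeZero n] (φ : ℕ → ℕ) (hφ : Monotone φ)
    (lam mu : Fin n → ℕ)
    (hlam : ∀ i j : Fin n, i ≤ j → lam j ≤ lam i)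
    (hmu : ∀ i j : Fin n, i ≤ j → mu j ≤ mu i)
    (hφlam : (fun i => φ (lam i)) = mu)
    (f : (Fin n → ℕ) → Rt n) (hf : IsKZ n lam f) :
    (∀ η ∈ SLam n mu,
      (∑ ζ ∈ (SLam n lam).filter (fun ζ => (fun i => φ (ζ i)) = η), f ζ).IsHomogeneous
        (∑ i, lam i)) ∧
    KZRel n mu (fun η => ∑ ζ ∈ (SLam n lam).filter (fun ζ => (fun i => φ (ζ i)) = η), f ζ) :=
  stmt_12_general n φ hφ lam mu f hf

end
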